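/- arXiv:2004.11519 — 2 statements merged into one kernel-verified Lean document; each statement's English description precedes it below -/
import Mathlib

section
/- Let a be a Hopf monoid in a braided monoidal category C and let θ : 𝟙 → a be a left integral. Then the morphism a → a ⊗ a obtained as (μ ⊗ μ) ∘ (id_a ⊗ Ω ⊗ id_a) ∘ (id_a ⊗ S) ∘ δ (with the evident unitor and associator insertions, i.e. the morphism sending, in Sweedler-style notation, h to h₁·Ω¹ ⊗ Ω²·S(h₂)) is equal to Ω ∘ ε : a → a ⊗ a, where Ω := (id_a ⊗ S) ∘ δ ∘ θ. -/
/-!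
Write `Ω = θ₁ ⊗ S θ₂`. Since `θ` is a left integral, `ε(h) Ω` is `Ω` computed for the integral
`h θ` instead of `θ`, i.e. `(hθ)₁ ⊗ S((hθ)₂) = h₁θ₁ ⊗ S(h₂θ₂)`. The comultiplication is
multiplicative and the antipode is anti-multiplicative, `S(h₂θ₂) = S(θ₂) S(h₂)`, so this is
`h₁Ω¹ ⊗ Ω² S(h₂)`. The two braidings involved, one from the multiplication of `A ⊗ A` and one from
anti-multiplicativity, combine by the hexagon identity into a braiding of `S(h₂)` past all of `Ω`,
which is trivial by naturality because `Ω` is a morphism out of the unit object.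
-/

open CategoryTheory MonoidalCategory

universe v u

variable (C : Type u) [Category.{v} C] [MonoidalCategory C] [BraidedCategory C]

/-- The middle-four interchange morphism, built from associators and the braiding,
used to equip the tensor product of two monoids with a monoid structure
`(μ ⊗ μ) ∘ (id ⊗ β ⊗ id)`. -/
def mid4 {C : Type u} [Category.{v} C] [MonoidalCategory C] [BraidedCategory C]
    (W X Y Z : C) : (W ⊗ X) ⊗ (Y ⊗ Z) ⟶ (W ⊗ Y) ⊗ (X ⊗ Z) :=
  (α_ W X (Y ⊗ Z)).hom ≫ (W ◁ (α_ X Y Z).inv) ≫ (W ◁ ((β_ X Y).hom ▷ Z)) ≫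
    (W ◁ (α_ Y X Z).hom) ≫ (α_ W Y (X ⊗ Z)).inv

/-- A Hopf monoid in a braided monoidal category `C`: an object `a` with a monoid
structure `(mul, one)`, a comonoid structure `(comul, counit)` which is a bimonoid
(`comul` and `counit` are monoid morphisms, where `a ⊗ a` carries the multiplication
`(mul ⊗ mul) ∘ (id ⊗ β ⊗ id)`), together with an antipode. -/
structure HopfMonoidIn where
  a : C
  mul : a ⊗ a ⟶ a
  one : 𝟙_ C ⟶ a
  comul : a ⟶ a ⊗ a
  counit : a ⟶ 𝟙_ C
  antipode : a ⟶ a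
  mul_assoc' : (mul ⊗ₘ 𝟙 a) ≫ mul = (α_ a a a).hom ≫ (𝟙 a ⊗ₘ mul) ≫ mul
  one_mul' : (λ_ a).inv ≫ (one ⊗ₘ 𝟙 a) ≫ mul = 𝟙 a
  mul_one' : (ρ_ a).inv ≫ (𝟙 a ⊗ₘ one) ≫ mul = 𝟙 a
  comul_coassoc' : comul ≫ (comul ⊗ₘ 𝟙 a) ≫ (α_ a a a).hom = comul ≫ (𝟙 a ⊗ₘ comul)
  counit_comul' : comul ≫ (counit ⊗ₘ 𝟙 a) ≫ (λ_ a).hom = 𝟙 a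
  comul_counit' : comul ≫ (𝟙 a ⊗ₘ counit) ≫ (ρ_ a).hom = 𝟙 a
  mul_comul' : mul ≫ comul = (comul ⊗ₘ comul) ≫ mid4 a a a a ≫ (mul ⊗ₘ mul)
  one_comul' : one ≫ comul = (λ_ (𝟙_ C)).inv ≫ (one ⊗ₘ one)
  mul_counit' : mul ≫ counit = (counit ⊗ₘ counit) ≫ (λ_ (𝟙_ C)).hom
  one_counit' : one ≫ counit = 𝟙 (𝟙_ C)
  antipode_left' : comul ≫ (antipode ⊗ₘ 𝟙 a) ≫ mul = counit ≫ one
  antipode_right' : comul ≫ (𝟙 a ⊗ₘ antipode) ≫ mul = counit ≫ one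

open BraidedCategory

open scoped MonObj ComonObj HopfObj

section

variable {C}

theorem rightUnitor_inv_whiskerLeft_tensorμ_braiding (x y u v : C) (f : 𝟙_ C ⟶ u ⊗ v) :
    (ρ_ (x ⊗ y)).inv ≫ (x ⊗ y) ◁ f ≫ tensorμ x y u v ≫ (x ⊗ u) ◁ (β_ y v).hom =
      x ◁ (λ_ y).inv ≫ x ◁ f ▷ y ≫ (α_ x (u ⊗ v) y).inv ≫ (α_ x u v).inv ▷ y ≫
        (α_ (x ⊗ u) v y).hom := by
  have hμβ : tensorμ x y u v ≫ (x ⊗ u) ◁ (β_ y v).hom =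
      (α_ x y (u ⊗ v)).hom ≫ x ◁ (β_ y (u ⊗ v)).hom ≫ x ◁ (α_ u v y).hom ≫
        (α_ x u (v ⊗ y)).inv := by
    rw [braiding_tensor_right_hom]
    dsimp only [tensorμ]
    monoidal
  rw [hμβ]
  slice_lhs 2 3 => rw [associator_naturality_right]
  slice_lhs 3 4 => rw [← whiskerLeft_comp, braiding_naturality_right, whiskerLeft_comp]
  rw [braiding_tensorUnit_right]
  monoidal

namespace CategoryTheory.HopfObj

variable (A : C) [HopfObj A]

theorem mul_tensorHom_mul_whiskerLeft_antipode :
    (μ[A] ⊗ₘ μ[A]) ≫ A ◁ 𝒮[A] =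
      (A ⊗ A) ◁ (𝒮[A] ⊗ₘ 𝒮[A]) ≫ (A ⊗ A) ◁ (β_ A A).hom ≫ (μ[A] ⊗ₘ μ[A]) := by
  rw [← whiskerLeft_comp_assoc, ← id_tensorHom, ← id_tensorHom, tensorHom_comp_tensorHom,
    tensorHom_comp_tensorHom, Category.comp_id, Category.id_comp, mul_antipode, Category.assoc]

theorem leftIntegral_comul_antipode_absorbs (θ : 𝟙_ C ⟶ A)
    (hθ : (ρ_ A).inv ≫ A ◁ θ ≫ μ[A] = ε[A] ≫ θ) :
    Δ[A] ≫ A ◁ 𝒮[A] ≫ A ◁ (λ_ A).inv ≫ A ◁ (θ ≫ Δ[A] ≫ A ◁ 𝒮[A]) ▷ A ≫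
        (α_ A (A ⊗ A) A).inv ≫ (α_ A A A).inv ▷ A ≫ (α_ (A ⊗ A) A A).hom ≫ (μ[A] ⊗ₘ μ[A]) =
      ε[A] ≫ θ ≫ Δ[A] ≫ A ◁ 𝒮[A] := by
  set Ω := θ ≫ Δ[A] ≫ A ◁ 𝒮[A]
  have hnat : tensorμ A A A A ≫ (A ⊗ A) ◁ (𝒮[A] ⊗ₘ 𝒮[A]) =
      (A ◁ 𝒮[A] ⊗ₘ A ◁ 𝒮[A]) ≫ tensorμ A A A A := by
    simpa using (tensorμ_natural (𝟙 A) 𝒮[A] (𝟙 A) 𝒮[A]).symm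
  symm
  calc ε[A] ≫ Ω
      = (ρ_ A).inv ≫ A ◁ θ ≫ μ[A] ≫ Δ[A] ≫ A ◁ 𝒮[A] := by
        simp only [Ω, ← Category.assoc, hθ]
    _ = (ρ_ A).inv ≫ A ◁ θ ≫ (Δ[A] ⊗ₘ Δ[A]) ≫ (A ◁ 𝒮[A] ⊗ₘ A ◁ 𝒮[A]) ≫ tensorμ A A A A ≫
          (A ⊗ A) ◁ (β_ A A).hom ≫ (μ[A] ⊗ₘ μ[A]) := by
        rw [BimonObj.mul_comul_assoc, mul_tensorHom_mul_whiskerLeft_antipode, reassoc_of% hnat]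
    _ = (ρ_ A).inv ≫ ((Δ[A] ≫ A ◁ 𝒮[A]) ⊗ₘ Ω) ≫ tensorμ A A A A ≫
          (A ⊗ A) ◁ (β_ A A).hom ≫ (μ[A] ⊗ₘ μ[A]) := by
        rw [← id_tensorHom, tensorHom_comp_tensorHom_assoc, tensorHom_comp_tensorHom_assoc,
          Category.id_comp, Category.assoc]
    _ = Δ[A] ≫ A ◁ 𝒮[A] ≫ (ρ_ (A ⊗ A)).inv ≫ (A ⊗ A) ◁ Ω ≫ tensorμ A A A A ≫
          (A ⊗ A) ◁ (β_ A A).hom ≫ (μ[A] ⊗ₘ μ[A]) := by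
        rw [MonoidalCategory.tensorHom_def (Δ[A] ≫ A ◁ 𝒮[A]) Ω, Category.assoc,
          ← rightUnitor_inv_naturality_assoc, Category.assoc]
    _ = _ := by rw [reassoc_of% rightUnitor_inv_whiskerLeft_tensorμ_braiding A A A A Ω]

end CategoryTheory.HopfObj

theorem mid4_eq_tensorμ (W X Y Z : C) : mid4 W X Y Z = tensorμ W X Y Z := rfl

namespace HopfMonoidIn

variable (H : HopfMonoidIn C)

instance : HopfObj H.a where
  one := H.one
  mul := H.mul
  one_mul := by
    rw [← cancel_epi (λ_ H.a).inv]
    simpa [tensorHom_id] using H.one_mul'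
  mul_one := by
    rw [← cancel_epi (ρ_ H.a).inv]
    simpa [id_tensorHom] using H.mul_one'
  mul_assoc := by simpa [tensorHom_id, id_tensorHom] using H.mul_assoc'
  counit := H.counit
  comul := H.comul
  counit_comul := by
    rw [← cancel_mono (λ_ H.a).hom]
    simpa [tensorHom_id] using H.counit_comul'
  comul_counit := by
    rw [← cancel_mono (ρ_ H.a).hom]
    simpa [id_tensorHom] using H.comul_counit'
  comul_assoc := by simpa [tensorHom_id, id_tensorHom] using H.comul_coassoc'.symm
  mul_comul := by simpa [mid4_eq_tensorμ] using H.mul_comul'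
  one_comul := H.one_comul'
  mul_counit := by simpa using H.mul_counit'
  one_counit := H.one_counit'
  antipode := H.antipode
  antipode_left := by simpa [tensorHom_id] using H.antipode_left'
  antipode_right := by simpa [id_tensorHom] using H.antipode_right'

end HopfMonoidIn

end

/-- For a Hopf monoid `a` in a braided monoidal category and a left integral
`θ : 𝟙 → a`, the morphism `a → a ⊗ a` sending (in Sweedler notation)
`h` to `h₁·Ω¹ ⊗ Ω²·S(h₂)` equals `Ω ∘ ε`, where `Ω := (id ⊗ S) ∘ δ ∘ θ`. -/
theorem hopf_monoid_Omega_absorbs (H : HopfMonoidIn C)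
    (θ : 𝟙_ C ⟶ H.a)
    (hθ : (ρ_ H.a).inv ≫ (𝟙 H.a ⊗ₘ θ) ≫ H.mul = H.counit ≫ θ) :
    H.comul ≫ (𝟙 H.a ⊗ₘ H.antipode) ≫ (H.a ◁ (λ_ H.a).inv) ≫
        (H.a ◁ ((θ ≫ H.comul ≫ (𝟙 H.a ⊗ₘ H.antipode)) ▷ H.a)) ≫
        (α_ H.a (H.a ⊗ H.a) H.a).inv ≫ ((α_ H.a H.a H.a).inv ▷ H.a) ≫
        (α_ (H.a ⊗ H.a) H.a H.a).hom ≫ (H.mul ⊗ₘ H.mul) =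
      H.counit ≫ (θ ≫ H.comul ≫ (𝟙 H.a ⊗ₘ H.antipode)) := by
  simp only [id_tensorHom] at hθ ⊢
  exact HopfObj.leftIntegral_comul_antipode_absorbs H.a θ hθ
end

section
/- Let A be a Hopf algebroid with central base algebra R over a field k, and let I ⊆ A be the k-linear span of {s(x)g − t(x)g : x ∈ R, g ∈ A} (an ideal of A, since s and t take values in the center). Then the following are equivalent: (ii) there exists n ∈ A with ε(n) = 1_R and h·n − s(ε(h))·n ∈ I for all h ∈ A; (iii) there exists n ∈ A with ε(n) = 1_R and n·h − s(ε(h))·n ∈ I for all h ∈ A. -/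
open TensorProduct

set_option synthInstance.maxHeartbeats 1000000
set_option maxHeartbeats 1600000

variable {k R A : Type*} [Field k] [CommRing R] [Ring A] [Algebra k R] [Algebra k A]

/-- The kernel of the canonical surjection `A ⊗[k] A → A ∘ A`, where `A ∘ A` is
the quotient identifying `t(y)g ⊗ h` with `g ⊗ s(y)h`. -/
def circKer (s t : R →ₐ[k] A) : Submodule k (A ⊗[k] A) :=
  Submodule.span k
    {z | ∃ (y : R) (g h : A), z = (t y * g) ⊗ₜ[k] h - g ⊗ₜ[k] (s y * h)}

/-- The kernel of the canonical surjection `(A ⊗[k] A) ⊗[k] A → A ∘ A ∘ A`. -/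
def circKer₃ (s t : R →ₐ[k] A) : Submodule k ((A ⊗[k] A) ⊗[k] A) :=
  Submodule.span k
    ({z | ∃ (y : R) (g h l : A),
        z = ((t y * g) ⊗ₜ[k] h) ⊗ₜ[k] l - (g ⊗ₜ[k] (s y * h)) ⊗ₜ[k] l} ∪
      {z | ∃ (y : R) (g h l : A),
        z = (g ⊗ₜ[k] (t y * h)) ⊗ₜ[k] l - (g ⊗ₜ[k] h) ⊗ₜ[k] (s y * l)})

/-- A Hopf algebroid structure with central base algebra `R` on the `k`-algebra `A`.
`δ` is presented by a `k`-linear lift `A → A ⊗[k] A` of the comultiplication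
`A → A ∘ A` (such a lift exists since `k` is a field), all axioms involving the
quotient `A ∘ A` being stated modulo `circKer s t` (respectively `circKer₃ s t`). -/
structure IsCentralHopfAlgebroid (s t : R →ₐ[k] A) (δ : A →ₗ[k] A ⊗[k] A)
    (ε : A →ₐ[k] R) (σ : A →ₗ[k] A) : Prop where
  s_central : ∀ (x : R) (g : A), s x * g = g * s x
  t_central : ∀ (x : R) (g : A), t x * g = g * t x
  comul_mul : ∀ g h : A, δ (g * h) - δ g * δ h ∈ circKer s t
  comul_one : δ 1 - (1 : A) ⊗ₜ[k] (1 : A) ∈ circKer s t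
  coassoc : ∀ h : A,
    (LinearMap.rTensor A δ) (δ h) -
      (TensorProduct.assoc k A A A).symm ((LinearMap.lTensor A δ) (δ h)) ∈ circKer₃ s t
  counit_left : ∀ h : A,
    LinearMap.mul' k A
      ((TensorProduct.map (s.toLinearMap ∘ₗ ε.toLinearMap) LinearMap.id) (δ h)) = h
  counit_right : ∀ h : A,
    LinearMap.mul' k A
      ((TensorProduct.map LinearMap.id (t.toLinearMap ∘ₗ ε.toLinearMap)) (δ h)) = h
  counit_s : ∀ (x : R) (h : A), ε (s x * h) = x * ε h
  counit_t : ∀ (y : R) (h : A), ε (t y * h) = ε h * y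
  comul_bimodule : ∀ (x y : R) (h : A),
    δ (s x * (t y * h)) - ((s x) ⊗ₜ[k] (t y)) * δ h ∈ circKer s t
  antipode_s : ∀ (x : R) (h : A), σ (s x * h) = t x * σ h
  antipode_t : ∀ (x : R) (h : A), σ (t x * h) = s x * σ h
  antipode_left : ∀ h : A,
    LinearMap.mul' k A ((LinearMap.lTensor A σ) (δ h)) = s (ε h)
  antipode_right : ∀ h : A,
    LinearMap.mul' k A ((LinearMap.rTensor A σ) (δ h)) = t (ε h)

namespace CHAaux

variable {s t : R →ₐ[k] A} {δ : A →ₗ[k] A ⊗[k] A} {ε : A →ₐ[k] R} {σ : A →ₗ[k] A}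

lemma cs (hH : IsCentralHopfAlgebroid s t δ ε σ) (c : R) (x y : A) :
    x * (s c * y) = s c * (x * y) := by
  rw [← mul_assoc, ← hH.s_central, mul_assoc]

lemma ct (hH : IsCentralHopfAlgebroid s t δ ε σ) (c : R) (x y : A) :
    x * (t c * y) = t c * (x * y) := by
  rw [← mul_assoc, ← hH.t_central, mul_assoc]

lemma tt_mul (hH : IsCentralHopfAlgebroid s t δ ε σ) (c d : R) (u v : A) :
    (t c * u) * (t d * v) = t (c * d) * (u * v) := by
  rw [mul_assoc, ct hH, ← mul_assoc, ← map_mul]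

lemma mem_J (x : R) (g : A) :
    s x * g - t x * g ∈ Submodule.span k {z : A | ∃ (x : R) (g : A), z = s x * g - t x * g} :=
  Submodule.subset_span ⟨x, g, rfl⟩

lemma J_mul_right (hH : IsCentralHopfAlgebroid s t δ ε σ) :
    ∀ z ∈ Submodule.span k {z : A | ∃ (x : R) (g : A), z = s x * g - t x * g}, ∀ y : A,
      z * y ∈ Submodule.span k {z : A | ∃ (x : R) (g : A), z = s x * g - t x * g} := by
  intro z hz
  induction hz using Submodule.span_induction with
  | mem x hx =>
    obtain ⟨c, g, rfl⟩ := hx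
    intro y
    rw [sub_mul, mul_assoc, mul_assoc]
    exact mem_J c (g * y)
  | zero => intro y; rw [zero_mul]; exact Submodule.zero_mem _
  | add a b _ _ ha hb => intro y; rw [add_mul]; exact Submodule.add_mem _ (ha y) (hb y)
  | smul c a _ ha => intro y; rw [smul_mul_assoc]; exact Submodule.smul_mem _ _ (ha y)

lemma J_mul_left (hH : IsCentralHopfAlgebroid s t δ ε σ) :
    ∀ z ∈ Submodule.span k {z : A | ∃ (x : R) (g : A), z = s x * g - t x * g}, ∀ y : A,
      y * z ∈ Submodule.span k {z : A | ∃ (x : R) (g : A), z = s x * g - t x * g} := by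
  intro z hz
  induction hz using Submodule.span_induction with
  | mem x hx =>
    obtain ⟨c, g, rfl⟩ := hx
    intro y
    rw [mul_sub, cs hH, ct hH]
    exact mem_J c (y * g)
  | zero => intro y; rw [mul_zero]; exact Submodule.zero_mem _
  | add a b _ _ ha hb => intro y; rw [mul_add]; exact Submodule.add_mem _ (ha y) (hb y)
  | smul c a _ ha => intro y; rw [mul_smul_comm]; exact Submodule.smul_mem _ _ (ha y)

lemma J_sigma (hH : IsCentralHopfAlgebroid s t δ ε σ) :
    ∀ z ∈ Submodule.span k {z : A | ∃ (x : R) (g : A), z = s x * g - t x * g},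
      σ z ∈ Submodule.span k {z : A | ∃ (x : R) (g : A), z = s x * g - t x * g} := by
  intro z hz
  induction hz using Submodule.span_induction with
  | mem x hx =>
    obtain ⟨c, g, rfl⟩ := hx
    rw [map_sub, hH.antipode_s, hH.antipode_t, ← neg_sub]
    exact Submodule.neg_mem _ (mem_J c (σ g))
  | zero => rw [map_zero]; exact Submodule.zero_mem _
  | add a b _ _ ha hb => rw [map_add]; exact Submodule.add_mem _ ha hb
  | smul c a _ ha => rw [map_smul]; exact Submodule.smul_mem _ _ ha

/-- A linear map that identifies the two kinds of generators kills `circKer`. -/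
lemma killK {M : Type*} [AddCommGroup M] [Module k M]
    (L : A ⊗[k] A →ₗ[k] M)
    (hL : ∀ (y : R) (g h : A), L ((t y * g) ⊗ₜ[k] h) = L (g ⊗ₜ[k] (s y * h))) :
    ∀ z ∈ circKer s t, L z = 0 := by
  intro z hz
  induction hz using Submodule.span_induction with
  | mem x hx => obtain ⟨y, g, h, rfl⟩ := hx; rw [map_sub, hL, sub_self]
  | zero => exact map_zero L
  | add x y _ _ hx hy => rw [map_add, hx, hy, add_zero]
  | smul c x _ hx => rw [map_smul, hx, smul_zero]

lemma P_ker (hH : IsCentralHopfAlgebroid s t δ ε σ) : ∀ z ∈ circKer s t,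
    LinearMap.mul' k A ((LinearMap.rTensor A σ) z) = 0 := by
  refine killK ((LinearMap.mul' k A) ∘ₗ (LinearMap.rTensor A σ)) ?_
  intro y g h
  simp only [LinearMap.comp_apply]
  rw [LinearMap.rTensor_tmul, LinearMap.rTensor_tmul, LinearMap.mul'_apply,
    LinearMap.mul'_apply, hH.antipode_t, mul_assoc, cs hH]

lemma P_mul (hH : IsCentralHopfAlgebroid s t δ ε σ) (a b : A) :
    LinearMap.mul' k A ((LinearMap.rTensor A σ) (δ a * δ b)) = t (ε (a * b)) := by
  have h0 := P_ker hH _ (hH.comul_mul a b)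
  rw [map_sub, map_sub, sub_eq_zero] at h0
  rw [← h0, hH.antipode_right]

noncomputable def Xi (σ : A →ₗ[k] A) :
    ((A ⊗[k] A) ⊗[k] A) ⊗[k] ((A ⊗[k] A) ⊗[k] A) →ₗ[k] A :=
  (LinearMap.mul' k A) ∘ₗ
    (TensorProduct.map
      ((LinearMap.mul' k A) ∘ₗ
        (TensorProduct.map (σ ∘ₗ LinearMap.mul' k A) (LinearMap.mul' k A)) ∘ₗ
        (TensorProduct.tensorTensorTensorComm k A A A A).toLinearMap)
      ((LinearMap.mul' k A) ∘ₗ (TensorProduct.map σ σ) ∘ₗ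
        (TensorProduct.comm k A A).toLinearMap)) ∘ₗ
    (TensorProduct.tensorTensorTensorComm k (A ⊗[k] A) A (A ⊗[k] A) A).toLinearMap

@[simp] lemma Xi_tmul (σ : A →ₗ[k] A) (x₁ x₂ x₃ y₁ y₂ y₃ : A) :
    Xi σ (((x₁ ⊗ₜ[k] x₂) ⊗ₜ[k] x₃) ⊗ₜ[k] ((y₁ ⊗ₜ[k] y₂) ⊗ₜ[k] y₃)) =
      σ (x₁ * y₁) * (x₂ * y₂) * (σ y₃ * σ x₃) := by
  simp [Xi, LinearMap.mul'_apply]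

/-- `Xi` kills `circKer₃` tensored (on the left) with anything. -/
lemma Xi_K3_left (hH : IsCentralHopfAlgebroid s t δ ε σ) :
    ∀ z ∈ circKer₃ s t, ∀ w : (A ⊗[k] A) ⊗[k] A, Xi σ (z ⊗ₜ[k] w) = 0 := by
  intro z hz
  induction hz using Submodule.span_induction with
  | mem x hx =>
    intro w
    have key : ∀ (P₁ P₂ : (A ⊗[k] A) ⊗[k] A),
        (∀ y₁ y₂ y₃ : A, Xi σ (P₁ ⊗ₜ[k] ((y₁ ⊗ₜ[k] y₂) ⊗ₜ[k] y₃)) =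
          Xi σ (P₂ ⊗ₜ[k] ((y₁ ⊗ₜ[k] y₂) ⊗ₜ[k] y₃))) →
        Xi σ ((P₁ - P₂) ⊗ₜ[k] w) = 0 := by
      intro P₁ P₂ hp
      rw [sub_tmul, map_sub, sub_eq_zero]
      induction w using TensorProduct.induction_on with
      | zero => rw [tmul_zero, tmul_zero]
      | add w₁ w₂ h₁ h₂ => rw [tmul_add, tmul_add, map_add, map_add, h₁, h₂]
      | tmul p y₃ =>
        induction p using TensorProduct.induction_on with
        | zero => rw [zero_tmul, tmul_zero, tmul_zero]
        | add p₁ p₂ h₁ h₂ =>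
          rw [add_tmul, tmul_add, tmul_add, map_add, map_add, h₁, h₂]
        | tmul y₁ y₂ => exact hp y₁ y₂ y₃
    rcases hx with hx | hx
    · obtain ⟨c, g, h, l, rfl⟩ := hx
      refine key _ _ fun y₁ y₂ y₃ => ?_
      simp only [Xi_tmul, mul_assoc, hH.antipode_t, hH.antipode_s, cs hH, ct hH]
    · obtain ⟨c, g, h, l, rfl⟩ := hx
      refine key _ _ fun y₁ y₂ y₃ => ?_
      simp only [Xi_tmul, mul_assoc, hH.antipode_t, hH.antipode_s, cs hH, ct hH]
  | zero => intro w; rw [zero_tmul]; exact (Xi σ).map_zero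
  | add x y _ _ hx hy => intro w; rw [add_tmul, map_add, hx w, hy w, add_zero]
  | smul c x _ hx => intro w; rw [smul_tmul, tmul_smul, map_smul, hx w, smul_zero]

/-- `Xi` kills `circKer₃` tensored (on the right) with anything. -/
lemma Xi_K3_right (hH : IsCentralHopfAlgebroid s t δ ε σ) :
    ∀ z ∈ circKer₃ s t, ∀ w : (A ⊗[k] A) ⊗[k] A, Xi σ (w ⊗ₜ[k] z) = 0 := by
  intro z hz
  induction hz using Submodule.span_induction with
  | mem x hx =>
    intro w
    have key : ∀ (P₁ P₂ : (A ⊗[k] A) ⊗[k] A),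
        (∀ x₁ x₂ x₃ : A, Xi σ (((x₁ ⊗ₜ[k] x₂) ⊗ₜ[k] x₃) ⊗ₜ[k] P₁) =
          Xi σ (((x₁ ⊗ₜ[k] x₂) ⊗ₜ[k] x₃) ⊗ₜ[k] P₂)) →
        Xi σ (w ⊗ₜ[k] (P₁ - P₂)) = 0 := by
      intro P₁ P₂ hp
      rw [tmul_sub, map_sub, sub_eq_zero]
      induction w using TensorProduct.induction_on with
      | zero => rw [zero_tmul, zero_tmul]
      | add w₁ w₂ h₁ h₂ => rw [add_tmul, add_tmul, map_add, map_add, h₁, h₂]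
      | tmul p x₃ =>
        induction p using TensorProduct.induction_on with
        | zero => rw [zero_tmul, zero_tmul, zero_tmul]
        | add p₁ p₂ h₁ h₂ =>
          rw [add_tmul, add_tmul, add_tmul, map_add, map_add, h₁, h₂]
        | tmul x₁ x₂ => exact hp x₁ x₂ x₃
    rcases hx with hx | hx
    · obtain ⟨c, g, h, l, rfl⟩ := hx
      refine key _ _ fun x₁ x₂ x₃ => ?_
      simp only [Xi_tmul, mul_assoc, hH.antipode_t, hH.antipode_s, cs hH, ct hH]
    · obtain ⟨c, g, h, l, rfl⟩ := hx
      refine key _ _ fun x₁ x₂ x₃ => ?_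
      simp only [Xi_tmul, mul_assoc, hH.antipode_t, hH.antipode_s, cs hH, ct hH]
  | zero => intro w; rw [tmul_zero]; exact (Xi σ).map_zero
  | add x y _ _ hx hy => intro w; rw [tmul_add, map_add, hx w, hy w, add_zero]
  | smul c x _ hx => intro w; rw [tmul_smul, map_smul, hx w, smul_zero]

lemma Xi_pq (σ : A →ₗ[k] A) (p q : A ⊗[k] A) (x₃ y₃ : A) :
    Xi σ ((p ⊗ₜ[k] x₃) ⊗ₜ[k] (q ⊗ₜ[k] y₃)) =
      LinearMap.mul' k A ((LinearMap.rTensor A σ) (p * q)) * (σ y₃ * σ x₃) := by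
  induction p using TensorProduct.induction_on with
  | zero => simp
  | add p₁ p₂ h₁ h₂ =>
    simp only [add_tmul, tmul_add, map_add, mul_add, add_mul, h₁, h₂]
  | tmul x₁ x₂ =>
    induction q using TensorProduct.induction_on with
    | zero => simp
    | add q₁ q₂ h₁ h₂ =>
      simp only [add_tmul, tmul_add, map_add, mul_add, add_mul, h₁, h₂]
    | tmul y₁ y₂ =>
      rw [Xi_tmul, Algebra.TensorProduct.tmul_mul_tmul, LinearMap.rTensor_tmul,
        LinearMap.mul'_apply]

lemma step1 (hH : IsCentralHopfAlgebroid s t δ ε σ) (a b : A) :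
    Xi σ ((LinearMap.rTensor A δ (δ a)) ⊗ₜ[k] (LinearMap.rTensor A δ (δ b))) =
      σ b * σ a := by
  have H : ∀ u v : A ⊗[k] A,
      Xi σ ((LinearMap.rTensor A δ u) ⊗ₜ[k] (LinearMap.rTensor A δ v)) =
        σ (LinearMap.mul' k A
            ((TensorProduct.map (s.toLinearMap ∘ₗ ε.toLinearMap) LinearMap.id) v)) *
          σ (LinearMap.mul' k A
            ((TensorProduct.map (s.toLinearMap ∘ₗ ε.toLinearMap) LinearMap.id) u)) := by
    intro u v
    induction u using TensorProduct.induction_on with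
    | zero => simp
    | add u₁ u₂ h₁ h₂ =>
      simp only [map_add, add_tmul, tmul_add, mul_add, add_mul, h₁, h₂]
    | tmul x x₃ =>
      induction v using TensorProduct.induction_on with
      | zero => simp
      | add v₁ v₂ h₁ h₂ =>
        simp only [map_add, add_tmul, tmul_add, mul_add, add_mul, h₁, h₂]
      | tmul y y₃ =>
        rw [LinearMap.rTensor_tmul, LinearMap.rTensor_tmul, Xi_pq, P_mul hH x y]
        simp only [TensorProduct.map_tmul, LinearMap.mul'_apply, LinearMap.comp_apply,
          LinearMap.id_coe, id_eq, AlgHom.toLinearMap_apply]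
        rw [hH.antipode_s, hH.antipode_s, tt_mul hH, map_mul, mul_comm (ε x) (ε y)]
  rw [H (δ a) (δ b), hH.counit_left a, hH.counit_left b]

noncomputable def FH (σ : A →ₗ[k] A) :
    (A ⊗[k] A) ⊗[k] (A ⊗[k] A) →ₗ[k] A :=
  (LinearMap.mul' k A) ∘ₗ
    (TensorProduct.map (LinearMap.mul' k A)
      ((LinearMap.mul' k A) ∘ₗ (TensorProduct.map σ σ) ∘ₗ
        (TensorProduct.comm k A A).toLinearMap)) ∘ₗ
    (TensorProduct.tensorTensorTensorComm k A A A A).toLinearMap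

@[simp] lemma FH_tmul (σ : A →ₗ[k] A) (u₁ u₂ v₁ v₂ : A) :
    FH σ ((u₁ ⊗ₜ[k] u₂) ⊗ₜ[k] (v₁ ⊗ₜ[k] v₂)) = (u₁ * v₁) * (σ v₂ * σ u₂) := by
  simp [FH, LinearMap.mul'_apply]

lemma FH_a (σ : A →ₗ[k] A) (u₁ u₂ : A) (v : A ⊗[k] A) :
    FH σ ((u₁ ⊗ₜ[k] u₂) ⊗ₜ[k] v) =
      u₁ * LinearMap.mul' k A ((LinearMap.lTensor A σ) v) * σ u₂ := by
  induction v using TensorProduct.induction_on with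
  | zero => simp
  | add v₁ v₂ h₁ h₂ => simp only [tmul_add, add_tmul, map_add, mul_add, add_mul, h₁, h₂]
  | tmul v₁ v₂ =>
    rw [FH_tmul, LinearMap.lTensor_tmul, LinearMap.mul'_apply]
    rw [mul_assoc, mul_assoc, mul_assoc]

lemma FH_b (hH : IsCentralHopfAlgebroid s t δ ε σ) (y : A) (p : A ⊗[k] A) :
    FH σ (p ⊗ₜ[k] δ y) =
      s (ε y) * LinearMap.mul' k A ((LinearMap.lTensor A σ) p) := by
  induction p using TensorProduct.induction_on with
  | zero => simp
  | add p₁ p₂ h₁ h₂ => simp only [tmul_add, add_tmul, map_add, mul_add, h₁, h₂]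
  | tmul u₁ u₂ =>
    rw [FH_a, hH.antipode_left y, LinearMap.lTensor_tmul, LinearMap.mul'_apply,
      show u₁ * s (ε y) = s (ε y) * u₁ from (hH.s_central _ _).symm, mul_assoc]

lemma step2 (hH : IsCentralHopfAlgebroid s t δ ε σ) (a b : A) :
    Xi σ (((TensorProduct.assoc k A A A).symm ((LinearMap.lTensor A δ) (δ a))) ⊗ₜ[k]
        ((TensorProduct.assoc k A A A).symm ((LinearMap.lTensor A δ) (δ b)))) =
      σ (a * b) := by
  have Hpq : ∀ (x₁ y₁ : A) (p q : A ⊗[k] A),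
      Xi σ (((TensorProduct.assoc k A A A).symm (x₁ ⊗ₜ[k] p)) ⊗ₜ[k]
          ((TensorProduct.assoc k A A A).symm (y₁ ⊗ₜ[k] q))) =
        σ (x₁ * y₁) * FH σ (p ⊗ₜ[k] q) := by
    intro x₁ y₁ p q
    induction p using TensorProduct.induction_on with
    | zero => simp
    | add p₁ p₂ h₁ h₂ =>
      simp only [tmul_add, add_tmul, map_add, mul_add, h₁, h₂]
    | tmul u₁ u₂ =>
      induction q using TensorProduct.induction_on with
      | zero => simp
      | add q₁ q₂ h₁ h₂ =>
        simp only [tmul_add, add_tmul, map_add, mul_add, h₁, h₂]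
      | tmul v₁ v₂ =>
        rw [TensorProduct.assoc_symm_tmul, TensorProduct.assoc_symm_tmul, Xi_tmul,
          FH_tmul, mul_assoc]
  have H : ∀ u v : A ⊗[k] A,
      Xi σ (((TensorProduct.assoc k A A A).symm ((LinearMap.lTensor A δ) u)) ⊗ₜ[k]
          ((TensorProduct.assoc k A A A).symm ((LinearMap.lTensor A δ) v))) =
        σ (LinearMap.mul' k A
            ((TensorProduct.map LinearMap.id (t.toLinearMap ∘ₗ ε.toLinearMap)) u) *
          LinearMap.mul' k A
            ((TensorProduct.map LinearMap.id (t.toLinearMap ∘ₗ ε.toLinearMap)) v)) := by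
    intro u v
    induction u using TensorProduct.induction_on with
    | zero => simp
    | add u₁ u₂ h₁ h₂ =>
      simp only [map_add, tmul_add, add_tmul, mul_add, add_mul, h₁, h₂]
    | tmul x₁ x₂ =>
      induction v using TensorProduct.induction_on with
      | zero => simp
      | add v₁ v₂ h₁ h₂ =>
        simp only [map_add, tmul_add, add_tmul, mul_add, add_mul, h₁, h₂]
      | tmul y₁ y₂ =>
        rw [LinearMap.lTensor_tmul, LinearMap.lTensor_tmul, Hpq, FH_b hH y₂ (δ x₂),
          hH.antipode_left x₂]
        simp only [TensorProduct.map_tmul, LinearMap.mul'_apply, LinearMap.comp_apply,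
          LinearMap.id_coe, id_eq, AlgHom.toLinearMap_apply]
        rw [show (x₁ * t (ε x₂)) * (y₁ * t (ε y₂)) = t (ε x₂ * ε y₂) * (x₁ * y₁) from by
            rw [← hH.t_central (ε x₂) x₁, ← hH.t_central (ε y₂) y₁, tt_mul hH],
          hH.antipode_t, ← map_mul, ← hH.s_central, ← map_mul, mul_comm (ε x₂) (ε y₂)]
        rw [map_mul]
  rw [H (δ a) (δ b), hH.counit_right a, hH.counit_right b]

lemma antimult (hH : IsCentralHopfAlgebroid s t δ ε σ) (a b : A) :
    σ (a * b) = σ b * σ a := by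
  have h1 := step1 hH a b
  have h2 := step2 hH a b
  have e : Xi σ ((LinearMap.rTensor A δ (δ a)) ⊗ₜ[k] (LinearMap.rTensor A δ (δ b))) -
      Xi σ (((TensorProduct.assoc k A A A).symm ((LinearMap.lTensor A δ) (δ a))) ⊗ₜ[k]
        ((TensorProduct.assoc k A A A).symm ((LinearMap.lTensor A δ) (δ b)))) =
      Xi σ (((LinearMap.rTensor A δ (δ a)) -
          (TensorProduct.assoc k A A A).symm ((LinearMap.lTensor A δ) (δ a))) ⊗ₜ[k]
          (LinearMap.rTensor A δ (δ b))) +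
      Xi σ (((TensorProduct.assoc k A A A).symm ((LinearMap.lTensor A δ) (δ a))) ⊗ₜ[k]
          ((LinearMap.rTensor A δ (δ b)) -
            (TensorProduct.assoc k A A A).symm ((LinearMap.lTensor A δ) (δ b)))) := by
    rw [sub_tmul, tmul_sub, map_sub, map_sub, sub_add_sub_cancel]
  rw [Xi_K3_left hH _ (hH.coassoc a) _, Xi_K3_right hH _ (hH.coassoc b) _, add_zero,
    h1, h2, sub_eq_zero] at e
  exact e.symm

lemma epsSigma (hH : IsCentralHopfAlgebroid s t δ ε σ) (h : A) : ε (σ h) = ε h := by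
  have key : ∀ z : A ⊗[k] A,
      ε (σ (LinearMap.mul' k A
          ((TensorProduct.map LinearMap.id (t.toLinearMap ∘ₗ ε.toLinearMap)) z))) =
        ε (LinearMap.mul' k A ((LinearMap.rTensor A σ) z)) := by
    intro z
    induction z using TensorProduct.induction_on with
    | zero => simp
    | add z₁ z₂ h₁ h₂ => simp only [map_add, h₁, h₂]
    | tmul x y =>
      simp only [TensorProduct.map_tmul, LinearMap.mul'_apply, LinearMap.comp_apply,
        LinearMap.id_coe, id_eq, AlgHom.toLinearMap_apply, LinearMap.rTensor_tmul]
      rw [show x * t (ε y) = t (ε y) * x from (hH.t_central _ _).symm, hH.antipode_t,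
        hH.counit_s, map_mul, mul_comm]
  have k1 := key (δ h)
  rw [hH.counit_right h, hH.antipode_right h] at k1
  rw [k1, show t (ε h) = t (ε h) * 1 from (mul_one _).symm, hH.counit_t, map_one, one_mul]

end CHAaux

/-- Maschke theorem for Hopf algebroids with central base algebra: the existence
of a normalized left integral is equivalent to the existence of a normalized
right integral, where `I` is the ideal spanned by `{s(x)g - t(x)g}`. -/
theorem central_hopf_algebroid_integrals (s t : R →ₐ[k] A) (δ : A →ₗ[k] A ⊗[k] A)
    (ε : A →ₐ[k] R) (σ : A →ₗ[k] A)
    (hH : IsCentralHopfAlgebroid s t δ ε σ)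
    (I : Submodule k A)
    (hI : I = Submodule.span k {z | ∃ (x : R) (g : A), z = s x * g - t x * g}) :
    (∃ n : A, ε n = 1 ∧ ∀ h : A, h * n - s (ε h) * n ∈ I) ↔
      (∃ n : A, ε n = 1 ∧ ∀ h : A, n * h - s (ε h) * n ∈ I) := by
  subst hI
  constructor
  · rintro ⟨n, hn1, hn2⟩
    refine ⟨σ n, by rw [CHAaux.epsSigma hH, hn1], fun h => ?_⟩
    have key : ∀ z : A ⊗[k] A,
        σ n * (LinearMap.mul' k A
            ((TensorProduct.map (s.toLinearMap ∘ₗ ε.toLinearMap) LinearMap.id) z)) -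
          σ n * (LinearMap.mul' k A ((LinearMap.rTensor A σ) z)) ∈
            Submodule.span k {z : A | ∃ (x : R) (g : A), z = s x * g - t x * g} := by
      intro z
      induction z using TensorProduct.induction_on with
      | zero => simp only [map_zero, mul_zero, sub_zero]; exact Submodule.zero_mem _
      | add z₁ z₂ h₁ h₂ =>
        simp only [map_add, mul_add]
        rw [add_sub_add_comm]
        exact Submodule.add_mem _ h₁ h₂
      | tmul x y =>
        simp only [TensorProduct.map_tmul, LinearMap.mul'_apply, LinearMap.comp_apply,
          LinearMap.id_coe, id_eq, AlgHom.toLinearMap_apply, LinearMap.rTensor_tmul]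
        have hx : s (ε x) * σ n - σ (x * n) ∈
            Submodule.span k {z : A | ∃ (x : R) (g : A), z = s x * g - t x * g} := by
          have m2 : σ (s (ε x) * n) - σ (x * n) ∈
              Submodule.span k {z : A | ∃ (x : R) (g : A), z = s x * g - t x * g} := by
            rw [← map_sub]
            refine CHAaux.J_sigma hH _ ?_
            have := Submodule.neg_mem
              (Submodule.span k {z : A | ∃ (x : R) (g : A), z = s x * g - t x * g}) (hn2 x)
            rwa [neg_sub] at this
          have heq : s (ε x) * σ n - σ (x * n) =
              (s (ε x) * σ n - t (ε x) * σ n) + (σ (s (ε x) * n) - σ (x * n)) := by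
            rw [hH.antipode_s]; abel
          rw [heq]
          exact Submodule.add_mem _ (CHAaux.mem_J _ _) m2
        have heq2 : σ n * (s (ε x) * y) - σ n * (σ x * y) =
            (s (ε x) * σ n - σ (x * n)) * y := by
          rw [CHAaux.antimult hH x n, sub_mul, CHAaux.cs hH, ← mul_assoc, ← mul_assoc]
        rw [heq2]
        exact CHAaux.J_mul_right hH _ hx y
    have k1 := key (δ h)
    rw [hH.counit_left h, hH.antipode_right h] at k1
    have k2 : σ n * t (ε h) - s (ε h) * σ n ∈
        Submodule.span k {z : A | ∃ (x : R) (g : A), z = s x * g - t x * g} := by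
      rw [← hH.t_central, ← neg_sub]
      exact Submodule.neg_mem _ (CHAaux.mem_J _ _)
    have heq3 : σ n * h - s (ε h) * σ n =
        (σ n * h - σ n * t (ε h)) + (σ n * t (ε h) - s (ε h) * σ n) := by abel
    rw [heq3]
    exact Submodule.add_mem _ k1 k2
  · rintro ⟨n, hn1, hn2⟩
    refine ⟨σ n, by rw [CHAaux.epsSigma hH, hn1], fun h => ?_⟩
    have key : ∀ z : A ⊗[k] A,
        (LinearMap.mul' k A
            ((TensorProduct.map LinearMap.id (t.toLinearMap ∘ₗ ε.toLinearMap)) z)) * σ n -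
          (LinearMap.mul' k A ((LinearMap.lTensor A σ) z)) * σ n ∈
            Submodule.span k {z : A | ∃ (x : R) (g : A), z = s x * g - t x * g} := by
      intro z
      induction z using TensorProduct.induction_on with
      | zero => simp only [map_zero, zero_mul, sub_zero]; exact Submodule.zero_mem _
      | add z₁ z₂ h₁ h₂ =>
        simp only [map_add, add_mul]
        rw [add_sub_add_comm]
        exact Submodule.add_mem _ h₁ h₂
      | tmul x y =>
        simp only [TensorProduct.map_tmul, LinearMap.mul'_apply, LinearMap.comp_apply,
          LinearMap.id_coe, id_eq, AlgHom.toLinearMap_apply, LinearMap.lTensor_tmul]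
        have hy : t (ε y) * σ n - σ y * σ n ∈
            Submodule.span k {z : A | ∃ (x : R) (g : A), z = s x * g - t x * g} := by
          rw [← CHAaux.antimult hH n y, ← hH.antipode_s, ← map_sub]
          refine CHAaux.J_sigma hH _ ?_
          have := Submodule.neg_mem
            (Submodule.span k {z : A | ∃ (x : R) (g : A), z = s x * g - t x * g}) (hn2 y)
          rwa [neg_sub] at this
        have heq : (x * t (ε y)) * σ n - (x * σ y) * σ n =
            x * (t (ε y) * σ n - σ y * σ n) := by
          rw [mul_sub, mul_assoc, mul_assoc]
        rw [heq]
        exact CHAaux.J_mul_left hH _ hy x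
    have k1 := key (δ h)
    rw [hH.counit_right h, hH.antipode_left h] at k1
    exact k1
end
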